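/- Let n ≥ 2 and let T = { (i,i) : i ∈ Z/nZ } ∪ { (i, i+1 mod n) : i ∈ Z/nZ }. Suppose x_i, y_j ∈ R^d (i, j ∈ Z/nZ) satisfy Σ_i x_i = 0 and Σ_j y_j = 0, and suppose x'_i, y'_j is another family satisfying the same zero-sum constraints with x_i + y_j = x'_i + y'_j for all (i,j) ∈ T. Then x_i = x'_i and y_j = y'_j for all i, j. -/
import Mathlib


/-- Identifiability: two centred families agreeing on the pairwise sums along the
two cyclic diagonals T = {(i,i)} ∪ {(i,i+1)} must be equal. -/
theorem stmt_8 (n d : ℕ) [NeZero n] (hn : 2 ≤ n)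
    (x y x' y' : ZMod n → (Fin d → ℝ))
    (hx : ∑ i : ZMod n, x i = 0) (hy : ∑ j : ZMod n, y j = 0)
    (hx' : ∑ i : ZMod n, x' i = 0) (hy' : ∑ j : ZMod n, y' j = 0)
    (hdiag : ∀ i : ZMod n, x i + y i = x' i + y' i)
    (hoff : ∀ i : ZMod n, x i + y (i + 1) = x' i + y' (i + 1)) :
    (∀ i : ZMod n, x i = x' i) ∧ (∀ j : ZMod n, y j = y' j) := by
  set f : ZMod n → (Fin d → ℝ) := fun j => y' j - y j with hf
  have hstep : ∀ i : ZMod n, f (i + 1) = f i := by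
    intro i
    have h1 := hdiag i
    have h2 := hoff i
    funext t
    have h1t := congrFun h1 t
    have h2t := congrFun h2 t
    simp only [hf, Pi.add_apply, Pi.sub_apply] at h1t h2t ⊢
    linarith
  have hconstN : ∀ k : ℕ, f (k : ZMod n) = f 0 := by
    intro k
    induction k with
    | zero => simp
    | succ m ih => push_cast; rw [hstep (m : ZMod n), ih]
  have hconst : ∀ j : ZMod n, f j = f 0 := by
    intro j
    have : ((j.val : ℕ) : ZMod n) = j := by simp [ZMod.natCast_val, ZMod.cast_id]
    rw [← this]; exact hconstN j.val
  have hsum : ∑ j : ZMod n, f j = 0 := by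
    simp only [hf, Finset.sum_sub_distrib, hy, hy', sub_zero]
  rw [Finset.sum_congr rfl (fun j _ => hconst j), Finset.sum_const] at hsum
  have hcard : (Finset.univ : Finset (ZMod n)).card = n := by
    simp [ZMod.card]
  rw [hcard] at hsum
  have hf0 : f 0 = 0 := by
    have hn0 : (n : ℝ) ≠ 0 := Nat.cast_ne_zero.mpr (NeZero.ne n)
    funext t
    have := congrFun hsum t
    simp only [Pi.smul_apply, Pi.zero_apply, nsmul_eq_mul] at this
    have : (n : ℝ) * f 0 t = 0 := this
    exact (mul_eq_zero.mp this).resolve_left hn0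
  have hfall : ∀ j : ZMod n, y' j = y j := by
    intro j
    have h := hconst j
    rw [hf0] at h
    have h2 : y' j - y j = 0 := h
    exact sub_eq_zero.mp h2
  refine ⟨fun i => ?_, fun j => (hfall j).symm⟩
  have h := hdiag i
  rw [hfall i] at h
  exact add_right_cancel h
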